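/- Define E_{ij} = (1/2)·[L_{θ_i}, Δ_j] ∈ End_K(Λ_n(p)) for i, j = 1, …, n, where [A, B] = A∘B − B∘A. Then [E_{ij}, E_{kl}] = δ_{jk}·E_{il} − δ_{il}·E_{kj} for all i, j, k, l ∈ {1,…,n}; that is, the E_{ij} satisfy the standard commutation relations of gl_n(K). -/

import Mathlib

noncomputable section

open scoped BigOperators

/-- Commutator `[x, y] = x*y - y*x` in an associative ring. -/
def brk {A : Type*} [Ring A] (x y : A) : A := x * y - y * x

/-- Defining relations of the `ℤ₂^p`-graded commutative algebra `Λ_n(p)`: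
`θ_i^{(α)}·θ_j^{(β)} = (−1)^{δ_{αβ}}·θ_j^{(β)}·θ_i^{(α)}`. -/
inductive LamRel (n p : ℕ) : FreeAlgebra ℂ (Fin n × Fin p) → FreeAlgebra ℂ (Fin n × Fin p) → Prop
  | comm : ∀ (i j : Fin n) (α β : Fin p),
      LamRel n p (FreeAlgebra.ι ℂ (i, α) * FreeAlgebra.ι ℂ (j, β))
        ((if α = β then (-1 : ℂ) else 1) • (FreeAlgebra.ι ℂ (j, β) * FreeAlgebra.ι ℂ (i, α)))

/-- The algebra `Λ_n(p)`. -/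
abbrev Lam (n p : ℕ) : Type := RingQuot (LamRel n p)

/-- The generators `θ_i^{(α)}` of `Λ_n(p)`. -/
def θc (n p : ℕ) (i : Fin n) (α : Fin p) : Lam n p :=
  RingQuot.mkAlgHom ℂ (LamRel n p) (FreeAlgebra.ι ℂ (i, α))

/-- `θ_i = Σ_{α=1}^p θ_i^{(α)}`. -/
def θv (n p : ℕ) (i : Fin n) : Lam n p := ∑ α : Fin p, θc n p i α

/-- The inhomogeneous subalgebra `IΛ_n(p)` generated by `θ_1, …, θ_n`. -/
def ILam (n p : ℕ) : Subalgebra ℂ (Lam n p) :=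
  Algebra.adjoin ℂ (Set.range (θv n p))

/-- `Δ_i = Σ_{α=1}^p ∂_i^{(α)}`. -/
def Δop (n p : ℕ) (Dp : Fin n → Fin p → Module.End ℂ (Lam n p)) (i : Fin n) :
    Module.End ℂ (Lam n p) := ∑ α : Fin p, Dp i α


/-! Write `L_i^α` for left multiplication by `θ_i^{(α)}`. The relations give
`[L_i^α, ∂_j^β] = 0` for `α ≠ β` and `[L_i^α, ∂_j^α] = 2 L_i^α ∂_j^α - δ_{ij}`, hence
`E_{ij} = Σ_α L_i^α ∂_j^α - (p/2) δ_{ij}`, and the scalar shift does not affect brackets.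
For a fixed colour `α` the operators `L_i^α, ∂_j^α` form a Clifford algebra, so
`[L_i^α ∂_j^α, L_k^α ∂_l^α] = δ_{jk} L_i^α ∂_l^α - δ_{il} L_k^α ∂_j^α`, while bilinears of two
different colours commute because every pair of their factors does (with sign `+1`). -/

section GradedRelations

variable {R A ι κ : Type*} [Ring A]

def diagProd [Fintype κ] (X D : ι → κ → A) (i j : ι) : A := ∑ α, X i α * D j α

theorem brk_sum_sum [Fintype κ] (f g : κ → A) :
    brk (∑ α, f α) (∑ β, g β) = ∑ α, ∑ β, brk (f α) (g β) := by
  rw [brk, Finset.sum_mul_sum, Finset.sum_mul_sum, Finset.sum_comm (f := fun β α => g β * f α)]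
  simp only [brk, ← Finset.sum_sub_distrib]

variable [CommRing R] [Algebra R A]

theorem brk_sub_smul_one_sub_smul_one (x y : A) (c c' : R) :
    brk (x - c • 1) (y - c' • 1) = brk x y := by
  simp only [brk, sub_mul, mul_sub, smul_mul_assoc, mul_smul_comm, one_mul, mul_one, smul_sub,
    smul_smul, mul_comm c c']
  abel

theorem brk_mul_mul_of_twisted_comm {a b d e : A} {ε c₁ c₂ : R} (hε : ε * ε = 1)
    (hdb : d * b = ε • (b * d) + c₁ • 1) (hea : e * a = ε • (a * e) + c₂ • 1)
    (hab : a * b = ε • (b * a)) (hde : d * e = ε • (e * d)) :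
    brk (a * d) (b * e) = c₁ • (a * e) - c₂ • (b * d) := by
  have hadbe : a * d * (b * e) = ε • (b * a * (e * d)) + c₁ • (a * e) := calc
    a * d * (b * e) = a * (d * b) * e := by simp only [mul_assoc]
    _ = ε • (a * b * (d * e)) + c₁ • (a * e) := by
      rw [hdb]; simp only [mul_add, add_mul, mul_smul_comm, smul_mul_assoc, mul_one, mul_assoc]
    _ = ε • (b * a * (e * d)) + c₁ • (a * e) := by
      rw [hab, hde, smul_mul_smul_comm, smul_smul, ← mul_assoc, hε, one_mul]
  have hbead : b * e * (a * d) = ε • (b * a * (e * d)) + c₂ • (b * d) := calc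
    b * e * (a * d) = b * (e * a) * d := by simp only [mul_assoc]
    _ = ε • (b * a * (e * d)) + c₂ • (b * d) := by
      rw [hea]; simp only [mul_add, add_mul, mul_smul_comm, smul_mul_assoc, mul_one, mul_assoc]
  rw [brk, hadbe, hbead, add_sub_add_left_eq_sub]

variable [DecidableEq ι] [DecidableEq κ] {X D : ι → κ → A}

theorem brk_eq_zero_of_ne
    (hDX : ∀ i j α β, D i α * X j β = (if α = β then (-1 : R) else 1) • (X j β * D i α)
      + (if i = j ∧ α = β then (1 : R) else 0) • 1) (i j : ι) {α β : κ} (h : α ≠ β) :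
    brk (X i α) (D j β) = 0 := by
  rw [brk, hDX, if_neg h.symm, if_neg (fun h' => h h'.2.symm)]
  simp

theorem brk_eq_two_smul_mul_sub
    (hDX : ∀ i j α β, D i α * X j β = (if α = β then (-1 : R) else 1) • (X j β * D i α)
      + (if i = j ∧ α = β then (1 : R) else 0) • 1) (i j : ι) (α : κ) :
    brk (X i α) (D j α) = (2 : R) • (X i α * D j α) - (if i = j then (1 : R) else 0) • 1 := by
  simp only [brk, hDX, ↓reduceIte, and_true, @eq_comm _ j i]
  module

theorem brk_mul_mul
    (hX : ∀ i j α β, X i α * X j β = (if α = β then (-1 : R) else 1) • (X j β * X i α))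
    (hDX : ∀ i j α β, D i α * X j β = (if α = β then (-1 : R) else 1) • (X j β * D i α)
      + (if i = j ∧ α = β then (1 : R) else 0) • 1)
    (hD : ∀ i j α β, D i α * D j β = (if α = β then (-1 : R) else 1) • (D j β * D i α))
    (i j k l : ι) (α β : κ) :
    brk (X i α * D j α) (X k β * D l β)
      = (if j = k ∧ α = β then (1 : R) else 0) • (X i α * D l β)
        - (if i = l ∧ α = β then (1 : R) else 0) • (X k β * D j α) := by
  refine brk_mul_mul_of_twisted_comm ?_ (hDX j k α β) ?_ (hX i k α β) (hD j l α β)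
  · split_ifs <;> norm_num
  · simpa only [eq_comm (a := β), eq_comm (a := l)] using hDX l i β α

variable [Fintype κ]

theorem brk_diagProd
    (hX : ∀ i j α β, X i α * X j β = (if α = β then (-1 : R) else 1) • (X j β * X i α))
    (hDX : ∀ i j α β, D i α * X j β = (if α = β then (-1 : R) else 1) • (X j β * D i α)
      + (if i = j ∧ α = β then (1 : R) else 0) • 1)
    (hD : ∀ i j α β, D i α * D j β = (if α = β then (-1 : R) else 1) • (D j β * D i α))
    (i j k l : ι) :
    brk (diagProd X D i j) (diagProd X D k l)
      = (if j = k then (1 : R) else 0) • diagProd X D i l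
        - (if i = l then (1 : R) else 0) • diagProd X D k j := by
  simp only [diagProd, brk_sum_sum, brk_mul_mul hX hDX hD, ite_and, Finset.sum_sub_distrib,
    Finset.smul_sum]
  split_ifs <;> simp

end GradedRelations

section HalfBracket

variable {R A ι κ : Type*} [Field R] [NeZero (2 : R)] [Ring A] [Algebra R A]
  [DecidableEq ι] [DecidableEq κ] [Fintype κ] {X D : ι → κ → A}

theorem half_brk_sum_sum_eq_diagProd_sub
    (hDX : ∀ i j α β, D i α * X j β = (if α = β then (-1 : R) else 1) • (X j β * D i α)
      + (if i = j ∧ α = β then (1 : R) else 0) • 1) (i j : ι) :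
    (1 / 2 : R) • brk (∑ α, X i α) (∑ α, D j α)
      = diagProd X D i j - ((Fintype.card κ / 2 : R) * if i = j then 1 else 0) • 1 := by
  have hdiag (α : κ) : ∑ β, brk (X i α) (D j β) = brk (X i α) (D j α) :=
    Fintype.sum_eq_single α fun β h => brk_eq_zero_of_ne hDX i j (Ne.symm h)
  simp only [brk_sum_sum, hdiag, brk_eq_two_smul_mul_sub hDX, Finset.sum_sub_distrib,
    ← Finset.smul_sum, Finset.sum_const, Finset.card_univ, ← Nat.cast_smul_eq_nsmul R, smul_smul,
    smul_sub, diagProd]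
  congr 2
  · rw [one_div, inv_mul_cancel₀ two_ne_zero, one_smul]
  · ring

theorem brk_half_brk_sum_sum
    (hX : ∀ i j α β, X i α * X j β = (if α = β then (-1 : R) else 1) • (X j β * X i α))
    (hDX : ∀ i j α β, D i α * X j β = (if α = β then (-1 : R) else 1) • (X j β * D i α)
      + (if i = j ∧ α = β then (1 : R) else 0) • 1)
    (hD : ∀ i j α β, D i α * D j β = (if α = β then (-1 : R) else 1) • (D j β * D i α))
    (i j k l : ι) :
    brk ((1 / 2 : R) • brk (∑ α, X i α) (∑ α, D j α))
        ((1 / 2 : R) • brk (∑ α, X k α) (∑ α, D l α))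
      = (if j = k then (1 : R) else 0) • ((1 / 2 : R) • brk (∑ α, X i α) (∑ α, D l α))
        - (if i = l then (1 : R) else 0) • ((1 / 2 : R) • brk (∑ α, X k α) (∑ α, D j α)) := by
  simp only [half_brk_sum_sum_eq_diagProd_sub hDX, brk_sub_smul_one_sub_smul_one,
    brk_diagProd hX hDX hD]
  split_ifs <;> simp_all

end HalfBracket

theorem θc_mul_θc (n p : ℕ) (i j : Fin n) (α β : Fin p) :
    θc n p i α * θc n p j β = (if α = β then (-1 : ℂ) else 1) • (θc n p j β * θc n p i α) := by
  simpa only [θc, map_mul, map_smul] using RingQuot.mkAlgHom_rel ℂ (LamRel.comm i j α β)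

theorem mulLeft_θc_mul_mulLeft_θc (n p : ℕ) (i j : Fin n) (α β : Fin p) :
    LinearMap.mulLeft ℂ (θc n p i α) * LinearMap.mulLeft ℂ (θc n p j β)
      = (if α = β then (-1 : ℂ) else 1)
        • (LinearMap.mulLeft ℂ (θc n p j β) * LinearMap.mulLeft ℂ (θc n p i α)) := by
  ext x
  simp only [Module.End.mul_apply, LinearMap.mulLeft_apply, LinearMap.smul_apply, ← mul_assoc,
    θc_mul_θc n p i j α β, smul_mul_assoc]

theorem mulLeft_θv (n p : ℕ) (i : Fin n) :
    LinearMap.mulLeft ℂ (θv n p i) = ∑ α, LinearMap.mulLeft ℂ (θc n p i α) :=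
  map_sum (Algebra.lmul ℂ (Lam n p)) _ _

theorem stmt_14_general (n p : ℕ)
    (Dp : Fin n → Fin p → Module.End ℂ (Lam n p))
    (hD2 : ∀ (i j : Fin n) (α β : Fin p),
      Dp i α * LinearMap.mulLeft ℂ (θc n p j β)
          - (if α = β then (-1 : ℂ) else 1) • (LinearMap.mulLeft ℂ (θc n p j β) * Dp i α)
        = if i = j ∧ α = β then 1 else 0)
    (hD3 : ∀ (i j : Fin n) (α β : Fin p),
      Dp i α * Dp j β = (if α = β then (-1 : ℂ) else 1) • (Dp j β * Dp i α))
    (E : Fin n → Fin n → Module.End ℂ (Lam n p))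
    (hE : ∀ i j, E i j
      = (1 / 2 : ℂ) • brk (LinearMap.mulLeft ℂ (θv n p i)) (Δop n p Dp j)) :
    ∀ i j k l : Fin n,
      brk (E i j) (E k l)
        = (if j = k then (1 : ℂ) else 0) • E i l - (if i = l then (1 : ℂ) else 0) • E k j := by
  have hDX (i j α β) : Dp i α * LinearMap.mulLeft ℂ (θc n p j β)
      = (if α = β then (-1 : ℂ) else 1) • (LinearMap.mulLeft ℂ (θc n p j β) * Dp i α)
        + (if i = j ∧ α = β then (1 : ℂ) else 0) • 1 := by
    rw [eq_add_of_sub_eq' (G := Module.End ℂ (Lam n p)) (hD2 i j α β),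
      ite_smul (i = j ∧ α = β), one_smul, zero_smul]
  intro i j k l
  simp only [hE, mulLeft_θv, Δop]
  exact brk_half_brk_sum_sum (X := fun i α => LinearMap.mulLeft ℂ (θc n p i α)) (D := Dp)
    (mulLeft_θc_mul_mulLeft_θc n p) hDX hD3 i j k l

/-- The operators `E_{ij} = (1/2)·[L_{θ_i}, Δ_j]` satisfy the standard
`gl_n` commutation relations `[E_{ij}, E_{kl}] = δ_{jk}·E_{il} − δ_{il}·E_{kj}`. -/
theorem stmt_14 (n p : ℕ) (hn : 0 < n) (hp : 0 < p)
    (Dp : Fin n → Fin p → Module.End ℂ (Lam n p))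
    (hD1 : ∀ (i : Fin n) (α : Fin p), Dp i α (1 : Lam n p) = 0)
    (hD2 : ∀ (i j : Fin n) (α β : Fin p),
      Dp i α * LinearMap.mulLeft ℂ (θc n p j β)
          - (if α = β then (-1 : ℂ) else 1) • (LinearMap.mulLeft ℂ (θc n p j β) * Dp i α)
        = if i = j ∧ α = β then 1 else 0)
    (hD3 : ∀ (i j : Fin n) (α β : Fin p),
      Dp i α * Dp j β = (if α = β then (-1 : ℂ) else 1) • (Dp j β * Dp i α))
    (E : Fin n → Fin n → Module.End ℂ (Lam n p))
    (hE : ∀ i j, E i j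
      = (1 / 2 : ℂ) • brk (LinearMap.mulLeft ℂ (θv n p i)) (Δop n p Dp j)) :
    ∀ i j k l : Fin n,
      brk (E i j) (E k l)
        = (if j = k then (1 : ℂ) else 0) • E i l - (if i = l then (1 : ℂ) else 0) • E k j :=
  stmt_14_general n p Dp hD2 hD3 E hE
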